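/- Let α, β, γ, δ be real numbers. On ℝ³ with standard basis e₁, e₂, e₃, let the bracket be the bilinear antisymmetric map determined by [e₁,e₂] = 0, [e₁,e₃] = α•e₁ + β•e₂, [e₂,e₃] = γ•e₁ + δ•e₂ (the Lie algebra of G₅), and let ∇ be the bilinear map ℝ³ → ℝ³ → ℝ³ determined on basis vectors by ∇_{e₁}e₁ = α•e₃, ∇_{e₂}e₁ = ((β+γ)/2)•e₃, ∇_{e₃}e₁ = -((β-γ)/2)•e₂, ∇_{e₁}e₂ = ((β+γ)/2)•e₃, ∇_{e₂}e₂ = δ•e₃, ∇_{e₃}e₂ = ((β-γ)/2)•e₁, ∇_{e₁}e₃ = α•e₁ + ((β+γ)/2)•e₂, ∇_{e₂}e₃ = ((β+γ)/2)•e₁ + δ•e₂, ∇_{e₃}e₃ = 0. Then for all X, Y, Z ∈ ℝ³, 2*g(∇_X Y, Z) = g([X,Y], Z) - g([Y,Z], X) + g([Z,X], Y), i.e. ∇ satisfies the Koszul formula characterizing the Levi-Civita connection of the left-invariant Lorentzian metric g. -/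

import Mathlib

/-! The Koszul formula holds for every torsion-free connection whose operators `∇_X` are
skew-adjoint for a symmetric bilinear form. For `G₅` both properties are coordinate identities:
`∇_X Y - ∇_Y X = [X,Y]` and `g(∇_X Y, Z) + g(Y, ∇_X Z) = 0`. -/

noncomputable section

/-- The standard basis of `ℝ³`. -/
def e₁ : Fin 3 → ℝ := ![1, 0, 0]
def e₂ : Fin 3 → ℝ := ![0, 1, 0]
def e₃ : Fin 3 → ℝ := ![0, 0, 1]

/-- The Lorentzian inner product with `e₁, e₂, e₃` pseudo-orthonormal, `e₃` timelike. -/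
def g (X Y : Fin 3 → ℝ) : ℝ := X 0 * Y 0 + X 1 * Y 1 - X 2 * Y 2

/-- The bilinear antisymmetric bracket of the Lie algebra of `G₅`:
`[e₁,e₂] = 0`, `[e₁,e₃] = αe₁ + βe₂`, `[e₂,e₃] = γe₁ + δe₂`. -/
def bracket (α β γ δ : ℝ) (X Y : Fin 3 → ℝ) : Fin 3 → ℝ :=
  (X 0 * Y 1 - X 1 * Y 0) • (0 : Fin 3 → ℝ) +
  (X 0 * Y 2 - X 2 * Y 0) • (α • e₁ + β • e₂) +
  (X 1 * Y 2 - X 2 * Y 1) • (γ • e₁ + δ • e₂)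

/-- The candidate Levi-Civita connection of `G₅`, extended bilinearly from its
values on the basis vectors. -/
def nabla (α β γ δ : ℝ) (X Y : Fin 3 → ℝ) : Fin 3 → ℝ :=
  (X 0 * Y 0) • (α • e₃) +
  (X 0 * Y 1) • (((β+γ)/2) • e₃) +
  (X 0 * Y 2) • (α • e₁ + ((β+γ)/2) • e₂) +
  (X 1 * Y 0) • (((β+γ)/2) • e₃) +
  (X 1 * Y 1) • (δ • e₃) +
  (X 1 * Y 2) • (((β+γ)/2) • e₁ + δ • e₂) +
  (X 2 * Y 0) • (-((β-γ)/2) • e₂) +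
  (X 2 * Y 1) • (((β-γ)/2) • e₁) +
  (X 2 * Y 2) • (0 : Fin 3 → ℝ)

/- Torsion-freeness expands each bracket term into two values of `B (D · ·) ·`; skew-symmetry of
`B (D X ·) ·` then cancels all but two copies of `B (D X Y) Z`. -/
theorem LinearMap.BilinForm.IsSymm.koszul_of_torsionFree_of_compatible {R M : Type*} [CommRing R]
    [AddCommGroup M] [Module R M] {B : LinearMap.BilinForm R M} (hB : B.IsSymm)
    {D bra : M → M → M} (htorsion : ∀ X Y, D X Y - D Y X = bra X Y)
    (hmetric : ∀ X Y Z, B (D X Y) Z + B Y (D X Z) = 0) (X Y Z : M) :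
    2 * B (D X Y) Z = B (bra X Y) Z - B (bra Y Z) X + B (bra Z X) Y := by
  simp only [← htorsion, map_sub, LinearMap.sub_apply]
  have hXZY := hmetric X Z Y
  have hYXZ := hmetric Y X Z
  have hZXY := hmetric Z X Y
  rw [hB.eq Z (D X Y)] at hXZY
  rw [hB.eq X (D Y Z)] at hYXZ
  rw [hB.eq X (D Z Y)] at hZXY
  linear_combination hXZY + hYXZ - hZXY

namespace G5

def gForm : LinearMap.BilinForm ℝ (Fin 3 → ℝ) :=
  LinearMap.mk₂ ℝ g (fun _ _ _ => by simp only [g, Pi.add_apply]; ring)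
    (fun _ _ _ => by simp only [g, Pi.smul_apply, smul_eq_mul]; ring)
    (fun _ _ _ => by simp only [g, Pi.add_apply]; ring)
    (fun _ _ _ => by simp only [g, Pi.smul_apply, smul_eq_mul]; ring)

theorem gForm_apply (X Y : Fin 3 → ℝ) : gForm X Y = g X Y := rfl

theorem gForm_isSymm : gForm.IsSymm :=
  ⟨fun X Y => by simp only [gForm_apply, g]; ring⟩

theorem nabla_sub_nabla (α β γ δ : ℝ) (X Y : Fin 3 → ℝ) :
    nabla α β γ δ X Y - nabla α β γ δ Y X = bracket α β γ δ X Y := by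
  funext i
  fin_cases i <;>
    simp only [nabla, bracket, e₁, e₂, e₃, Pi.sub_apply, Pi.add_apply, Pi.smul_apply,
      Pi.zero_apply, smul_eq_mul, Fin.zero_eta, Fin.mk_one, Fin.reduceFinMk, Matrix.cons_val] <;> ring

theorem g_nabla_add_g_nabla (α β γ δ : ℝ) (X Y Z : Fin 3 → ℝ) :
    g (nabla α β γ δ X Y) Z + g Y (nabla α β γ δ X Z) = 0 := by
  simp only [g, nabla, e₁, e₂, e₃, Pi.add_apply, Pi.smul_apply, Pi.zero_apply,
    smul_eq_mul, Matrix.cons_val]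
  ring

end G5

/-- `∇` satisfies the Koszul formula characterizing the Levi-Civita connection
of the left-invariant Lorentzian metric `g` on `G₅`. -/
theorem G5_LeviCivita_Koszul (α β γ δ : ℝ) (X Y Z : Fin 3 → ℝ) :
    2 * g (nabla α β γ δ X Y) Z =
      g (bracket α β γ δ X Y) Z - g (bracket α β γ δ Y Z) X + g (bracket α β γ δ Z X) Y := by
  simpa only [G5.gForm_apply] using
    G5.gForm_isSymm.koszul_of_torsionFree_of_compatible (G5.nabla_sub_nabla α β γ δ)
      (G5.g_nabla_add_g_nabla α β γ δ) X Y Z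

end
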